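/- arXiv:2307.07430 — 4 statements merged into one kernel-verified Lean document; each statement's English description precedes it below -/
import Mathlib

section
/- For a permutation σ of Fin n, the trace of the induced linear map on the k-th exterior power Λ^k(ℚ^n) equals the sum over all k-element subsets S of Fin n that are setwise invariant under σ of the sign of the restriction of σ to S. -/
/-- The permutation matrix of `σ`, with `(P_σ)_{i,j} = 1` if `i = σ j` and `0` otherwise. -/
def permMat (n : ℕ) (σ : Equiv.Perm (Fin n)) : Matrix (Fin n) (Fin n) ℚ :=
  Matrix.of fun i j => if i = σ j then 1 else 0

open ExteriorAlgebra in
/-- The endomorphism of the `k`-th exterior power induced by an endomorphism of `M`. -/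
noncomputable def extPowMap (R : Type*) [CommRing R] {M : Type*} [AddCommGroup M] [Module R M]
    (k : ℕ) (f : M →ₗ[R] M) : (⋀[R]^k M) →ₗ[R] (⋀[R]^k M) :=
  (ExteriorAlgebra.map f).toLinearMap.restrict (p := ⋀[R]^k M) (q := ⋀[R]^k M) <| by
    intro x hx
    rw [← ιMulti_span_fixedDegree] at hx ⊢
    induction hx using Submodule.span_induction with
    | mem x h =>
        obtain ⟨m, rfl⟩ := h
        rw [AlgHom.toLinearMap_apply, map_apply_ιMulti]
        exact Submodule.subset_span ⟨f ∘ m, rfl⟩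
    | zero => simp
    | add x y _ _ hx hy => rw [map_add]; exact Submodule.add_mem _ hx hy
    | smul r x _ hx => rw [map_smul]; exact Submodule.smul_mem _ r hx

/-!
The wedges `e_S` of standard basis vectors over the `k`-subsets `S` form a basis of `Λ^k`, and
the coefficient of `e_S` in `Λ^k f (e_S)` is the principal minor of `f` on `S`, so the trace of
`Λ^k f` is the sum of the principal `k × k` minors of `f`. For the permutation matrix of `σ` the
minor on `S` is the determinant of the permutation matrix of `σ|_S` when `σ(S) = S`; otherwise
`σ` moves a point of `S` out of `S` (a zero row) or into `S` (a zero column).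
-/

theorem Matrix.det_submatrix_permMatrix {R I : Type*} [CommRing R] [Fintype I] [DecidableEq I]
    (σ : Equiv.Perm I) (s : Finset I) :
    ((σ.permMatrix R).submatrix (Subtype.val : {x // x ∈ s} → I) Subtype.val).det =
      if h : ∀ x, x ∈ s ↔ σ x ∈ s then
        ((Equiv.Perm.sign (σ.subtypePerm (p := (· ∈ s)) fun x => (h x).symm) : ℤ) : R)
      else 0 := by
  split_ifs with h
  · rw [← Matrix.det_permutation]
    congr 1
    ext x y
    simp [Subtype.ext_iff]
  · obtain ⟨x, hx⟩ := not_forall.mp h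
    by_cases hxs : x ∈ s
    · have hσx : σ x ∉ s := fun h' => hx (iff_of_true hxs h')
      refine Matrix.det_eq_zero_of_row_eq_zero ⟨x, hxs⟩ fun y => ?_
      simp [ne_of_mem_of_not_mem y.2 hσx |>.symm]
    · have hσx : σ x ∈ s := by tauto
      refine Matrix.det_eq_zero_of_column_eq_zero ⟨σ x, hσx⟩ fun y => ?_
      simp [ne_of_mem_of_not_mem y.2 hxs]

theorem exteriorPower.trace_map_eq_sum_det_submatrix {R M I : Type*} [CommRing R]
    [AddCommGroup M] [Module R M] [LinearOrder I] [Fintype I]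
    (b : Module.Basis I R M) (k : ℕ) (f : M →ₗ[R] M) :
    LinearMap.trace R _ (map k f) = ∑ s : Set.powersetCard I k,
      ((LinearMap.toMatrix b b f).submatrix
        (Subtype.val : {x // x ∈ (s : Finset I)} → I) Subtype.val).det := by
  classical
  rw [LinearMap.trace_eq_matrix_trace R (b.exteriorPower k), Matrix.trace]
  refine Finset.sum_congr rfl fun s _ => ?_
  let e : Fin k ≃ (s : Finset I) := ((s : Finset I).orderIsoOfFin s.prop).toEquiv
  rw [Matrix.diag_apply, LinearMap.toMatrix_apply, basis_repr_apply, basis_apply,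
    map_apply_ιMulti_family, ιMulti_family, ιMultiDual_apply_ιMulti,
    ← Matrix.det_submatrix_equiv_self e, ← Matrix.det_transpose]
  congr 1
  ext i j
  simp only [Matrix.transpose_apply, Matrix.of_apply, Matrix.submatrix_apply,
    LinearMap.toMatrix_apply, Module.Basis.coord_apply, Function.comp_apply]
  rfl

theorem extPowMap_eq_map (R : Type*) [CommRing R] {M : Type*} [AddCommGroup M] [Module R M]
    (k : ℕ) (f : M →ₗ[R] M) : extPowMap R k f = exteriorPower.map k f := by
  ext m
  simp [extPowMap, Function.comp_def]

theorem permMat_eq_transpose_permMatrix (n : ℕ) (σ : Equiv.Perm (Fin n)) :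
    permMat n σ = (σ.permMatrix ℚ).transpose := by
  ext i j
  simp [permMat, eq_comm]

/-- The trace of a permutation `σ` on the `k`-th exterior power `Λ^k(ℚ^n)` equals the sum,
over all `k`-element subsets `S` of `Fin n` that are setwise invariant under `σ`, of the sign
of the permutation of `S` induced by `σ`. -/
theorem trace_extPow_permutation {n : ℕ} (σ : Equiv.Perm (Fin n)) (k : ℕ) :
    LinearMap.trace ℚ _ (extPowMap ℚ k (Matrix.toLin' (permMat n σ))) =
      ∑ S : Finset (Fin n),
        if h : S.card = k ∧ ∀ x, x ∈ S ↔ σ x ∈ S then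
          ((Equiv.Perm.sign (σ.subtypePerm (p := fun x => x ∈ S) (fun x => (h.2 x).symm)) : ℤ) : ℚ)
        else 0 := by
  rw [extPowMap_eq_map, exteriorPower.trace_map_eq_sum_det_submatrix (Pi.basisFun ℚ (Fin n)),
    LinearMap.toMatrix_eq_toMatrix', LinearMap.toMatrix'_toLin', permMat_eq_transpose_permMatrix]
  simp_rw [← Matrix.transpose_submatrix, Matrix.det_transpose]
  rw [← Finset.sum_subtype (Finset.univ.filter (·.card = k)) (by simp) fun S =>
      ((σ.permMatrix ℚ).submatrix (Subtype.val : {x // x ∈ S} → Fin n) Subtype.val).det,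
    Finset.sum_filter]
  refine Finset.sum_congr rfl fun S _ => ?_
  by_cases hk : S.card = k
  · simp only [hk, true_and, if_true, Matrix.det_submatrix_permMatrix]
    -- the two `∀ x : Fin n` conditions carry different `Decidable` instances
    congr
  · simp [hk]
end

section
/- For a permutation σ of Fin n, the following identity of formal power series over ℚ holds: exp(Σ_{k≥1} (x^k / k) · fix(σ^k)) = ∏_{i≥1} (1 − x^i)^{-m_i(σ)}, where fix(σ^k) is the number of fixed points of σ^k and m_i(σ) is the number of i-cycles of σ. -/
/-!
Let `S` be the series inside `exp`. Both sides are solutions of the linear differential equation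
`F' = S' F` with constant term `1`, and over `ℚ` such a solution is unique (its coefficients are
determined recursively). For `exp S` this is the chain rule. For the product, the logarithmic
derivative of `(1 - X^c)⁻¹` is `c X^(c-1) / (1 - X^c) = ∑_{c ∣ k+1} c X^k`; summed over the cycle
lengths `c` of `σ` (fixed points counted as 1-cycles) its `X^k` coefficient is the number of points
whose cycle length divides `k + 1`, i.e. `fix(σ^(k+1))`, which is the `X^k` coefficient of `S'`.
-/

open PowerSeries

/-- The formal exponential of a power series (with zero constant term): the coefficient of
`x^k` in `exp f` is `Σ_{m ≤ k} (coeff k of f^m) / m!`. -/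
noncomputable def expPS (f : PowerSeries ℚ) : PowerSeries ℚ :=
  PowerSeries.mk fun k =>
    ∑ m ∈ Finset.range (k + 1), (PowerSeries.coeff k (f ^ m)) / (m.factorial : ℚ)

/-- The full cycle type of `σ`, including cycles of length 1 (fixed points). -/
def fullCycleType {n : ℕ} (σ : Equiv.Perm (Fin n)) : Multiset ℕ :=
  σ.cycleType + Multiset.replicate (Finset.univ.filter fun x => σ x = x).card 1

open Finset

namespace Equiv.Perm

variable {α : Type*} [Fintype α] [DecidableEq α]

theorem card_support_pow (σ : Perm α) (k : ℕ) :
    #(σ ^ k).support = (σ.cycleType.filter fun c => ¬ c ∣ k).sum := by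
  induction σ using cycle_induction_on with
  | base_one => simp
  | base_cycles σ hσ =>
    rw [hσ.cycleType, Multiset.filter_singleton]
    by_cases hdvd : #σ.support ∣ k
    · rw [if_neg (not_not.mpr hdvd), orderOf_dvd_iff_pow_eq_one.mp (hσ.orderOf ▸ hdvd)]
      simp
    · rw [if_pos hdvd, Multiset.sum_singleton, hσ.support_pow_eq_iff.mpr (hσ.orderOf ▸ hdvd)]
  | induction_disjoint σ τ hd _ hσ hτ =>
    rw [hd.commute.mul_pow, (hd.pow_disjoint_pow k k).card_support_mul, hσ, hτ, hd.cycleType_mul,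
      Multiset.filter_add, Multiset.sum_add]

theorem card_filter_apply_eq_self (σ : Perm α) :
    #{x | σ x = x} = Fintype.card α - #σ.support := by
  rw [← card_compl, support, compl_filter]
  simp

theorem card_filter_pow_apply_eq_self (σ : Perm α) (k : ℕ) :
    #{x | (σ ^ k) x = x} = (σ.partition.parts.filter (· ∣ k)).sum := by
  have hsplit := σ.partition.parts.sum_filter_add_sum_filter_not (· ∣ k)
  have hnot :
      σ.partition.parts.filter (fun c => ¬ c ∣ k) = σ.cycleType.filter fun c => ¬ c ∣ k := by
    rw [parts_partition, Multiset.filter_add, add_eq_left, Multiset.filter_eq_nil]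
    intro c hc
    simp [Multiset.eq_of_mem_replicate hc]
  rw [hnot, ← card_support_pow, σ.partition.parts_sum] at hsplit
  rw [card_filter_apply_eq_self]
  omega

end Equiv.Perm

theorem Multiset.sum_map_ite_eq_sum_map_filter {α M : Type*} [AddCommMonoid M] (s : Multiset α)
    (p : α → Prop) [DecidablePred p] (f : α → M) :
    (s.map fun a => if p a then f a else 0).sum = ((s.filter p).map f).sum := by
  induction s using Multiset.induction_on with
  | empty => simp
  | cons a s ih =>
    rw [Multiset.filter_cons, Multiset.map_cons, Multiset.sum_cons, ih]
    split_ifs <;> simp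

namespace PowerSeries

section CommSemiring

variable {R : Type*} [CommSemiring R]

theorem eq_of_derivative_eq_mul [IsAddTorsionFree R] {T F G : R⟦X⟧}
    (h0 : constantCoeff F = constantCoeff G) (hF : d⁄dX R F = T * F) (hG : d⁄dX R G = T * G) :
    F = G := by
  ext k
  induction k using Nat.strong_induction_on with | _ k ih =>
  rcases k with _ | k
  · simpa using h0
  have hk : coeff k (d⁄dX R F) = coeff k (d⁄dX R G) := by
    rw [hF, hG, coeff_mul, coeff_mul]
    refine sum_congr rfl fun p hp => ?_
    rw [ih p.2 (Nat.lt_succ_of_le (HasAntidiagonal.antidiagonal.snd_le hp))]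
  rw [coeff_derivative, coeff_derivative, ← Nat.cast_succ, mul_comm, ← nsmul_eq_mul,
    mul_comm, ← nsmul_eq_mul] at hk
  exact nsmul_right_injective k.succ_ne_zero hk

theorem derivative_mul_of_eq_mul {f g F G : R⟦X⟧} (hF : d⁄dX R F = f * F)
    (hG : d⁄dX R G = g * G) : d⁄dX R (F * G) = (f + g) * (F * G) := by
  rw [Derivation.leibniz, hF, hG, smul_eq_mul, smul_eq_mul]
  ring

theorem derivative_multiset_prod_map {ι : Type*} (s : Multiset ι) {F f : ι → R⟦X⟧}
    (h : ∀ i ∈ s, d⁄dX R (F i) = f i * F i) :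
    d⁄dX R (s.map F).prod = (s.map f).sum * (s.map F).prod := by
  induction s using Multiset.induction_on with
  | empty => simp
  | cons a s ih =>
    simp only [Multiset.map_cons, Multiset.prod_cons, Multiset.sum_cons]
    exact derivative_mul_of_eq_mul (h a (Multiset.mem_cons_self a s))
      (ih fun i hi => h i (Multiset.mem_cons_of_mem hi))

theorem coeff_pow_eq_zero_of_lt {f : R⟦X⟧} (hf : constantCoeff f = 0) {m k : ℕ} (hk : k < m) :
    coeff k (f ^ m) = 0 := by
  obtain ⟨g, rfl⟩ := X_dvd_iff.mpr hf
  rw [mul_pow, coeff_X_pow_mul', if_neg (by omega)]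

end CommSemiring

section Field

variable {K : Type*} [Field K]

theorem inv_one_sub_X_pow {c : ℕ} (hc : c ≠ 0) : (1 - X ^ c : K⟦X⟧)⁻¹ = expand c hc (mk 1) := by
  symm
  rw [eq_inv_iff_mul_eq_one (by simp [hc]), ← expand_X c hc, ← map_one (expand c hc), ← map_sub,
    ← map_mul, mk_one_mul_one_sub_eq_one, map_one]

theorem coeff_X_pow_pred_mul_inv_one_sub_X_pow {c : ℕ} (hc : c ≠ 0) (k : ℕ) :
    coeff k (X ^ (c - 1) * (1 - X ^ c : K⟦X⟧)⁻¹) = if c ∣ k + 1 then 1 else 0 := by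
  rw [inv_one_sub_X_pow hc, coeff_X_pow_mul', coeff_expand]
  by_cases hck : c ≤ k + 1
  · obtain ⟨j, hj⟩ := Nat.exists_eq_add_of_le hck
    rw [if_pos (by omega), show k - (c - 1) = j by omega, hj]
    simp [Nat.dvd_add_self_left]
  · rw [if_neg (by omega), if_neg (Nat.not_dvd_of_pos_of_lt k.succ_pos (by omega))]

theorem derivative_inv_one_sub_X_pow (c : ℕ) :
    d⁄dX K (1 - X ^ c : K⟦X⟧)⁻¹ = ((c : K) • (X ^ (c - 1) * (1 - X ^ c)⁻¹)) * (1 - X ^ c)⁻¹ := by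
  rw [derivative_inv', map_sub, derivative_one, derivative_pow, derivative_X, Algebra.smul_def]
  simp only [map_natCast]
  ring

end Field

theorem expPS_eq_subst {f : ℚ⟦X⟧} (hf : constantCoeff f = 0) : expPS f = (exp ℚ).subst f := by
  ext k
  rw [expPS, coeff_mk, coeff_subst' (HasSubst.of_constantCoeff_zero' hf),
    finsum_eq_sum_of_support_subset (s := range (k + 1))]
  · refine sum_congr rfl fun m _ => ?_
    simp [coeff_exp, div_eq_inv_mul]
  · intro m hm
    rw [Function.mem_support] at hm
    rw [coe_range, Set.mem_Iio]
    by_contra hkm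
    exact hm (by rw [coeff_pow_eq_zero_of_lt hf (by omega), smul_zero])

theorem derivative_expPS {f : ℚ⟦X⟧} (hf : constantCoeff f = 0) :
    d⁄dX ℚ (expPS f) = d⁄dX ℚ f * expPS f := by
  rw [expPS_eq_subst hf, derivative_subst (HasSubst.of_constantCoeff_zero' hf), derivative_exp,
    mul_comm]

theorem constantCoeff_expPS (f : ℚ⟦X⟧) : constantCoeff (expPS f) = 1 := by
  rw [← coeff_zero_eq_constantCoeff_apply, expPS, coeff_mk]
  simp

end PowerSeries

theorem expPS_eq_prod_inv_one_sub_X_pow (s : Multiset ℕ) (hs : ∀ c ∈ s, c ≠ 0) :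
    expPS (mk fun k => if k = 0 then 0 else ((s.filter (· ∣ k)).sum : ℚ) / k) =
      (s.map fun c => (1 - X ^ c : ℚ⟦X⟧)⁻¹).prod := by
  set S : ℚ⟦X⟧ := mk fun k => if k = 0 then 0 else ((s.filter (· ∣ k)).sum : ℚ) / k
  have hS : constantCoeff S = 0 := by
    rw [← coeff_zero_eq_constantCoeff_apply, coeff_mk, if_pos rfl]
  have hdS : d⁄dX ℚ S = (s.map fun c : ℕ => (c : ℚ) • (X ^ (c - 1) * (1 - X ^ c)⁻¹)).sum := by
    ext k
    rw [coeff_derivative, coeff_mk, if_neg k.succ_ne_zero, map_multiset_sum, Multiset.map_map,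
      Multiset.map_congr rfl fun c hc => by
        rw [Function.comp_apply, coeff_smul, coeff_X_pow_pred_mul_inv_one_sub_X_pow (hs c hc),
          smul_ite, smul_eq_mul, mul_one, smul_zero],
      Multiset.sum_map_ite_eq_sum_map_filter, ← Nat.cast_multiset_sum, Nat.cast_succ,
      div_mul_cancel₀ _ k.cast_add_one_ne_zero]
  refine eq_of_derivative_eq_mul (T := d⁄dX ℚ S) ?_ (derivative_expPS hS) ?_
  · rw [constantCoeff_expPS, map_multiset_prod, Multiset.map_map]
    refine (Multiset.prod_eq_one fun x hx => ?_).symm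
    obtain ⟨c, hc, rfl⟩ := Multiset.mem_map.mp hx
    simp [hs c hc]
  · rw [derivative_multiset_prod_map s fun c _ => derivative_inv_one_sub_X_pow c, hdS]

theorem fullCycleType_eq_parts_partition {n : ℕ} (σ : Equiv.Perm (Fin n)) :
    fullCycleType σ = σ.partition.parts := by
  rw [fullCycleType, Equiv.Perm.parts_partition, Equiv.Perm.card_filter_apply_eq_self]

/-- `exp(Σ_{k≥1} (x^k/k)·fix(σ^k)) = ∏_{i≥1} (1 - x^i)^{-m_i(σ)}`, where `fix(σ^k)` is the
number of fixed points of `σ^k` and `m_i(σ)` the number of `i`-cycles of `σ` (all cycle lengths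
lie in `[1, n]`, so the product may be taken over `1 ≤ i ≤ n`). -/
theorem exp_fix_genfun {n : ℕ} (σ : Equiv.Perm (Fin n)) :
    expPS (PowerSeries.mk fun k =>
        if k = 0 then 0
        else ((Finset.univ.filter fun x => (σ ^ k) x = x).card : ℚ) / (k : ℚ)) =
      ∏ i ∈ Finset.Icc 1 n,
        (((1 : PowerSeries ℚ) - (X : PowerSeries ℚ) ^ i)⁻¹) ^ ((fullCycleType σ).count i) := by
  have hparts : ∀ c ∈ fullCycleType σ, c ∈ Icc 1 n := by
    intro c hc
    rw [fullCycleType_eq_parts_partition] at hc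
    exact mem_Icc.mpr
      ⟨σ.partition.parts_pos hc, Fintype.card_fin n ▸ σ.partition.le_of_mem_parts hc⟩
  have hpos : ∀ c ∈ fullCycleType σ, c ≠ 0 := fun c hc => by
    have := mem_Icc.mp (hparts c hc)
    omega
  simp_rw [Equiv.Perm.card_filter_pow_apply_eq_self, ← fullCycleType_eq_parts_partition]
  rw [expPS_eq_prod_inv_one_sub_X_pow _ hpos, prod_multiset_map_count]
  refine prod_subset (fun c hc => hparts c (Multiset.mem_toFinset.mp hc)) fun i _ hi => ?_
  rw [Multiset.count_eq_zero.mpr (Multiset.mem_toFinset.not.mp hi), pow_zero]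
end

section
/- The cyclotomic (necklace) identity: for every natural number q, the following identity of formal power series over ℚ holds: 1/(1 − q·t) = ∏_{n≥1} (1 − t^n)^{−M(q,n)}, where M(q,n) = (1/n) Σ_{d ∣ n} μ(d) q^{n/d} is the necklace number (μ is the Möbius function). -/
/-!
Take logarithmic derivatives. Since `(1 - X ^ n)⁻¹` has logarithmic derivative
`n X ^ (n - 1) / (1 - X ^ n) = ∑_{n ∣ j + 1} n X ^ j`, the `j`-th coefficient of the logarithmic
derivative of the product is `∑_{d ∣ j + 1} d M(d)`, which is `q ^ (j + 1)` by Möbius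
inversion of Witt's formula; this is also the `j`-th coefficient of the logarithmic derivative of
`(1 - q X)⁻¹`. Factors with `n > k` do not contribute below degree `k`, and in characteristic
zero two power series with equal constant terms whose logarithmic derivatives agree below
degree `k` agree up to degree `k`.
-/

open PowerSeries

namespace PowerSeries

section Derivative

variable {R : Type*} [CommRing R] [IsAddTorsionFree R]

theorem X_pow_succ_dvd_sub_constantCoeff_of_X_pow_dvd_derivative {f : R⟦X⟧} {k : ℕ}
    (h : X ^ k ∣ d⁄dX R f) : X ^ (k + 1) ∣ f - C (constantCoeff f) := by
  rw [X_pow_dvd_iff] at h ⊢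
  rintro (_ | j) hj
  · simp
  · have := h j (by omega)
    rw [coeff_derivative, ← Nat.cast_succ, ← nsmul_eq_mul',
      smul_eq_zero_iff_right j.succ_ne_zero] at this
    simp [this]

end Derivative

variable {K : Type*} [Field K]

/-- Junk value: `logDeriv f = 0` when `constantCoeff f = 0`, since then `f⁻¹ = 0`. -/
noncomputable def logDeriv (f : K⟦X⟧) : K⟦X⟧ := d⁄dX K f * f⁻¹

theorem logDeriv_mul {f g : K⟦X⟧} (hf : constantCoeff f ≠ 0) (hg : constantCoeff g ≠ 0) :
    logDeriv (f * g) = logDeriv f + logDeriv g := by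
  have hff := PowerSeries.mul_inv_cancel f hf
  have hgg := PowerSeries.mul_inv_cancel g hg
  calc d⁄dX K (f * g) * (f * g)⁻¹
      = (f * f⁻¹) * (d⁄dX K g * g⁻¹) + (g * g⁻¹) * (d⁄dX K f * f⁻¹) := by
        rw [Derivation.leibniz, PowerSeries.mul_inv_rev, smul_eq_mul, smul_eq_mul]; ring
    _ = logDeriv f + logDeriv g := by rw [hff, hgg, logDeriv, logDeriv]; ring

theorem logDeriv_inv (f : K⟦X⟧) : logDeriv f⁻¹ = -logDeriv f := by
  by_cases hf : constantCoeff f = 0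
  · simp [logDeriv, PowerSeries.inv_eq_zero.mpr hf]
  · have hinv : f⁻¹⁻¹ = f :=
      ((PowerSeries.eq_inv_iff_mul_eq_one (by simpa using hf)).mpr
        (PowerSeries.mul_inv_cancel f hf)).symm
    rw [logDeriv, logDeriv, derivative_inv', hinv]
    linear_combination -(d⁄dX K f * f⁻¹) * PowerSeries.inv_mul_cancel f hf

theorem logDeriv_pow {f : K⟦X⟧} (hf : constantCoeff f ≠ 0) (n : ℕ) :
    logDeriv (f ^ n) = n • logDeriv f := by
  induction n with
  | zero => simp [logDeriv]
  | succ n ih =>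
    rw [pow_succ, logDeriv_mul (by simpa using pow_ne_zero n hf) hf, ih, succ_nsmul]

theorem logDeriv_prod {ι : Type*} (s : Finset ι) (f : ι → K⟦X⟧)
    (hf : ∀ i ∈ s, constantCoeff (f i) ≠ 0) :
    logDeriv (∏ i ∈ s, f i) = ∑ i ∈ s, logDeriv (f i) := by
  classical
  induction s using Finset.induction_on with
  | empty => simp [logDeriv]
  | insert a s ha ih =>
    rw [Finset.prod_insert ha, Finset.sum_insert ha, logDeriv_mul (hf a (by simp)),
      ih fun i hi => hf i (by simp [hi])]
    simpa [map_prod, Finset.prod_eq_zero_iff] using fun i hi => hf i (by simp [hi])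

theorem X_pow_succ_dvd_sub_of_X_pow_dvd_logDeriv_sub [CharZero K] {f g : K⟦X⟧} {k : ℕ}
    (h0 : constantCoeff f = constantCoeff g) (hg : constantCoeff g ≠ 0)
    (h : X ^ k ∣ logDeriv f - logDeriv g) : X ^ (k + 1) ∣ f - g := by
  set u := f * g⁻¹
  have hu0 : constantCoeff u = 1 := by simp [u, h0, hg]
  have hlog : logDeriv u = logDeriv f - logDeriv g := by
    rw [logDeriv_mul (h0 ▸ hg) (by simpa using hg), logDeriv_inv, sub_eq_add_neg]
  have hder : d⁄dX K u = logDeriv u * u := by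
    rw [logDeriv, mul_assoc, PowerSeries.inv_mul_cancel u (by simp [hu0]), mul_one]
  have hfg : f - g = (u - C (constantCoeff u)) * g := by
    rw [hu0, map_one, sub_mul, one_mul, mul_assoc, PowerSeries.inv_mul_cancel g hg, mul_one]
  rw [hfg]
  refine Dvd.dvd.mul_right (X_pow_succ_dvd_sub_constantCoeff_of_X_pow_dvd_derivative ?_) g
  rw [hder, hlog]
  exact h.mul_right u

theorem inv_one_sub_smul_X (r : K) : (1 - r • X : K⟦X⟧)⁻¹ = mk (r ^ ·) := by
  rw [PowerSeries.inv_eq_iff_mul_eq_one (by simp)]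
  ext (_ | n)
  · simp
  · simp [mul_sub, coeff_succ_mul_X, pow_succ, mul_comm r]

theorem X_pow_pred_mul_inv_one_sub_X_pow {n : ℕ} (hn : n ≠ 0) :
    (X ^ (n - 1) * (1 - X ^ n)⁻¹ : K⟦X⟧) = mk fun j ↦ if n ∣ j + 1 then 1 else 0 := by
  rw [eq_comm, PowerSeries.eq_mul_inv_iff_mul_eq (by simp [hn])]
  ext j
  simp only [mul_sub, mul_one, map_sub, coeff_mul_X_pow', coeff_X_pow, coeff_mk]
  rcases le_or_gt n j with hnj | hjn
  · have hsub : j - n + 1 = j + 1 - n := by omega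
    simp [hsub, hnj, hnj.not_gt, show j ≠ n - 1 by omega]
  · have hdvd : n ∣ j + 1 ↔ j = n - 1 :=
      ⟨fun h ↦ by have := Nat.le_of_dvd (by omega) h; omega,
        fun h ↦ by rw [h, Nat.sub_add_cancel (Nat.one_le_iff_ne_zero.mpr hn)]⟩
    simp [hjn.not_ge, hdvd]

theorem coeff_logDeriv_inv_one_sub_smul_X (r : K) (j : ℕ) :
    coeff j (logDeriv (1 - r • X : K⟦X⟧)⁻¹) = r ^ (j + 1) := by
  rw [logDeriv_inv, logDeriv, inv_one_sub_smul_X]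
  simp [pow_succ']

theorem coeff_logDeriv_inv_one_sub_X_pow {n : ℕ} (hn : n ≠ 0) (j : ℕ) :
    coeff j (logDeriv (1 - X ^ n : K⟦X⟧)⁻¹) = if n ∣ j + 1 then (n : K) else 0 := by
  rw [logDeriv_inv, logDeriv, map_sub, derivative_one, derivative_pow, derivative_X, zero_sub,
    neg_mul, neg_neg, mul_one, mul_assoc, X_pow_pred_mul_inv_one_sub_X_pow hn, ← map_natCast C,
    coeff_C_mul, coeff_mk]
  simp

theorem constantCoeff_prod_inv_one_sub_X_pow_pow (e : ℕ → ℕ) (k : ℕ) :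
    constantCoeff (∏ n ∈ Finset.Icc 1 k, ((1 - X ^ n : K⟦X⟧)⁻¹) ^ e n) = 1 := by
  rw [map_prod]
  refine Finset.prod_eq_one fun n hn ↦ ?_
  simp [show n ≠ 0 by grind]

theorem coeff_logDeriv_prod_inv_one_sub_X_pow_pow (e : ℕ → ℕ) {j k : ℕ} (hj : j < k) :
    coeff j (logDeriv (∏ n ∈ Finset.Icc 1 k, ((1 - X ^ n : K⟦X⟧)⁻¹) ^ e n)) =
      ∑ d ∈ (j + 1).divisors, (d : K) * e d := by
  have hpos : ∀ n ∈ Finset.Icc 1 k, n ≠ 0 := fun n hn ↦ by grind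
  have hterm : ∀ n ∈ Finset.Icc 1 k, coeff j (logDeriv (((1 - X ^ n : K⟦X⟧)⁻¹) ^ e n)) =
      if n ∣ j + 1 then (n : K) * e n else 0 := fun n hn ↦ by
    rw [logDeriv_pow (by simp [hpos n hn]), map_nsmul,
      coeff_logDeriv_inv_one_sub_X_pow (hpos n hn)]
    split_ifs <;> simp [nsmul_eq_mul, mul_comm]
  have hdiv : (Finset.Icc 1 k).filter (· ∣ j + 1) = (j + 1).divisors := by
    ext d
    simp only [Finset.mem_filter, Finset.mem_Icc, Nat.mem_divisors]
    constructor
    · rintro ⟨-, h⟩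
      exact ⟨h, j.succ_ne_zero⟩
    · rintro ⟨h, -⟩
      exact ⟨⟨Nat.pos_of_dvd_of_pos h j.succ_pos, (Nat.le_of_dvd j.succ_pos h).trans hj⟩, h⟩
  rw [logDeriv_prod _ _ fun n hn ↦ by simp [hpos n hn], map_sum, Finset.sum_congr rfl hterm,
    ← Finset.sum_filter, hdiv]

end PowerSeries

theorem sum_divisors_mul_eq_pow_of_eq_moebius {K : Type*} [Field K] [CharZero K] (x : K)
    (a : ℕ → K) (ha : ∀ n : ℕ, 1 ≤ n → a n = (1 / (n : K)) *
      ∑ d ∈ n.divisors, ((ArithmeticFunction.moebius d : ℤ) : K) * x ^ (n / d))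
    {n : ℕ} (hn : 0 < n) : ∑ d ∈ n.divisors, (d : K) * a d = x ^ n := by
  refine (ArithmeticFunction.sum_eq_iff_sum_mul_moebius_eq (f := fun d ↦ (d : K) * a d)).mpr
    (fun m hm ↦ ?_) n hn
  rw [Nat.sum_divisorsAntidiagonal
    (f := fun d e ↦ ((ArithmeticFunction.moebius d : ℤ) : K) * x ^ e), ha m hm]
  have : (m : K) ≠ 0 := Nat.cast_ne_zero.mpr hm.ne'
  field_simp

/-- The cyclotomic (necklace) identity: if `M q n` is the necklace number given by Witt's
formula `n·M(q,n) = Σ_{d∣n} μ(d) q^{n/d}`, then `1/(1 - q·t) = ∏_{n≥1} (1 - t^n)^{-M(q,n)}`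
as formal power series over `ℚ`; the infinite product converges `t`-adically, so its `k`-th
coefficient agrees with that of the finite product over `1 ≤ n ≤ k`. -/
theorem necklace_identity (q : ℕ) (M : ℕ → ℕ)
    (hM : ∀ n : ℕ, 1 ≤ n →
      ((M n : ℚ) : ℚ) = (1 / (n : ℚ)) *
        ∑ d ∈ n.divisors, ((ArithmeticFunction.moebius d : ℤ) : ℚ) * (q : ℚ) ^ (n / d)) :
    ∀ k : ℕ,
      PowerSeries.coeff k (((1 : PowerSeries ℚ) - (q : ℚ) • (X : PowerSeries ℚ))⁻¹) =
        PowerSeries.coeff k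
          (∏ n ∈ Finset.Icc 1 k,
            (((1 : PowerSeries ℚ) - (X : PowerSeries ℚ) ^ n)⁻¹) ^ (M n)) := by
  intro k
  have hdvd : X ^ (k + 1) ∣ (1 - (q : ℚ) • X : ℚ⟦X⟧)⁻¹ -
      ∏ n ∈ Finset.Icc 1 k, ((1 - X ^ n : ℚ⟦X⟧)⁻¹) ^ M n := by
    refine X_pow_succ_dvd_sub_of_X_pow_dvd_logDeriv_sub ?_ ?_ (X_pow_dvd_iff.mpr ?_)
    · rw [constantCoeff_prod_inv_one_sub_X_pow_pow]
      simp [smul_eq_C_mul]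
    · rw [constantCoeff_prod_inv_one_sub_X_pow_pow]
      exact one_ne_zero
    · intro j hj
      rw [map_sub, coeff_logDeriv_inv_one_sub_smul_X,
        coeff_logDeriv_prod_inv_one_sub_X_pow_pow _ hj,
        sum_divisors_mul_eq_pow_of_eq_moebius _ _ hM j.succ_pos, sub_self]
  rw [← sub_eq_zero, ← map_sub]
  exact X_pow_dvd_iff.mp hdvd k k.lt_succ_self
end

section
/- The Hilbert series of the ring of symmetric polynomials in n variables over ℚ: for every d ≥ 0, the dimension of the space of symmetric polynomials in ℚ[x_1,...,x_n] that are homogeneous of degree d equals the number of partitions of d into parts of size at most n; equivalently, Σ_{d≥0} dim(ℚ[x_1,...,x_n]^{S_n}_d) t^d = ∏_{i=1}^n (1 − t^i)^{-1} as formal power series. -/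
/-!
By the fundamental theorem of symmetric polynomials, `xᵢ ↦ e_{i+1}` is an isomorphism from
`ℚ[x₁, …, xₙ]` onto the symmetric polynomials. Since `e_{i+1}` is homogeneous of degree `i + 1`,
this isomorphism carries the polynomials that are weighted homogeneous of degree `d` for the
weights `i + 1` onto the symmetric polynomials homogeneous of degree `d`. The former have the
monomials `x^t` with `∑ (i + 1) tᵢ = d` as a basis, and `t` is the multiplicity vector of a
partition of `d` into parts at most `n`.
-/

/-- The space of symmetric polynomials in `ℚ[x_1,…,x_n]` that are homogeneous of degree `d`. -/
noncomputable def symHomogeneous (n d : ℕ) : Submodule ℚ (MvPolynomial (Fin n) ℚ) :=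
  MvPolynomial.homogeneousSubmodule (Fin n) ℚ d ⊓
    Subalgebra.toSubmodule (MvPolynomial.symmetricSubalgebra (Fin n) ℚ)

open MvPolynomial

lemma Finsupp.sum_map_toMultiset {σ M : Type*} [AddCommMonoid M] (w : σ → M) (t : σ →₀ ℕ) :
    ((toMultiset t).map w).sum = weight w t := by
  induction t using Finsupp.induction with
  | zero => simp
  | single_add i c t _ _ ih =>
    simp [ih, Finsupp.weight_single, Multiset.map_nsmul, Multiset.sum_nsmul]

namespace MvPolynomial

section Grading

variable {R S σ τ : Type*} [CommSemiring R] [CommSemiring S] [Algebra R S]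

lemma isHomogeneous_esymm [Fintype σ] (k : ℕ) : (esymm σ R k).IsHomogeneous k := by
  refine IsHomogeneous.sum _ _ _ fun t ht ↦ ?_
  simpa [(Finset.mem_powersetCard.mp ht).2] using
    IsHomogeneous.prod t X (fun _ ↦ 1) fun i _ ↦ isHomogeneous_X R i

lemma IsWeightedHomogeneous.isHomogeneous_aeval {w : σ → ℕ} {φ : MvPolynomial σ R} {m : ℕ}
    (hφ : φ.IsWeightedHomogeneous w m) (g : σ → MvPolynomial τ S)
    (hg : ∀ i, (g i).IsHomogeneous (w i)) : (aeval g φ).IsHomogeneous m := by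
  refine IsHomogeneous.sum _ _ _ fun t ht ↦ ?_
  rw [← zero_add m, ← hφ (mem_support_iff.mp ht), Finsupp.weight_apply]
  exact (isHomogeneous_C _ _).mul (IsHomogeneous.prod _ _ _ fun i _ ↦ by
    simpa [mul_comm] using (hg i).pow (t i))

lemma homogeneousComponent_aeval {w : σ → ℕ} (g : σ → MvPolynomial τ S)
    (hg : ∀ i, (g i).IsHomogeneous (w i)) (m : ℕ) (φ : MvPolynomial σ R) :
    homogeneousComponent m (aeval g φ) = aeval g (weightedHomogeneousComponent w m φ) := by
  induction φ using induction_on' with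
  | monomial t r =>
    have ht := isWeightedHomogeneous_monomial w t r rfl
    rw [homogeneousComponent_of_mem (ht.isHomogeneous_aeval g hg),
      weightedHomogeneousComponent_of_mem ht]
    split_ifs <;> simp
  | add φ ψ hφ hψ => simp only [map_add, hφ, hψ]

end Grading

lemma finrank_weightedHomogeneousSubmodule {R σ M : Type*} [CommRing R] [StrongRankCondition R]
    [AddCommMonoid M] (w : σ → M) (m : M) :
    Module.finrank R (weightedHomogeneousSubmodule R w m) =
      Nat.card {t : σ →₀ ℕ // Finsupp.weight w t = m} := by
  rw [weightedHomogeneousSubmodule_eq_finsupp_supported,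
    (AddMonoidAlgebra.supportedEquivFinsupp _).finrank_eq,
    Module.finrank_eq_nat_card_basis Finsupp.basisSingleOne]
  rfl

section FundamentalTheorem

variable {R σ : Type*} [CommRing R] [Fintype σ] {n : ℕ}

lemma aeval_esymm_injective (hn : n ≤ Fintype.card σ) :
    Function.Injective (aeval (R := R) fun i : Fin n ↦ esymm σ R (i + 1)) := by
  intro p q h
  apply esymmAlgHom_injective R hn
  ext1
  simpa only [esymmAlgHom_apply] using h

lemma map_aeval_esymm_weightedHomogeneousSubmodule (hn : Fintype.card σ ≤ n) (d : ℕ) :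
    (weightedHomogeneousSubmodule R (fun i : Fin n ↦ (i : ℕ) + 1) d).map
        (aeval fun i : Fin n ↦ esymm σ R (i + 1)).toLinearMap =
      homogeneousSubmodule σ R d ⊓ Subalgebra.toSubmodule (symmetricSubalgebra σ R) := by
  have hesymm (i : Fin n) : (esymm σ R (i + 1)).IsHomogeneous (i + 1) := isHomogeneous_esymm _
  ext p
  constructor
  · rintro ⟨q, hq, rfl⟩
    refine ⟨hq.isHomogeneous_aeval _ hesymm, ?_⟩
    simpa only [AlgHom.toLinearMap_apply, esymmAlgHom_apply, SetLike.mem_coe,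
      Subalgebra.mem_toSubmodule] using (esymmAlgHom σ R n q).2
  · rintro ⟨hp, hsymm⟩
    obtain ⟨q, hq⟩ := esymmAlgHom_surjective R hn ⟨p, hsymm⟩
    refine ⟨weightedHomogeneousComponent _ d q, weightedHomogeneousComponent_mem _ q d, ?_⟩
    calc aeval (fun i : Fin n ↦ esymm σ R (i + 1)) (weightedHomogeneousComponent _ d q)
        = homogeneousComponent d (esymmAlgHom σ R n q).val := by
          rw [esymmAlgHom_apply, homogeneousComponent_aeval _ hesymm]
      _ = p := by rw [hq, homogeneousComponent_eq_self hp]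

end FundamentalTheorem

end MvPolynomial

namespace Nat.Partition

noncomputable def ofMultiplicities {n d : ℕ} (t : Fin n →₀ ℕ)
    (ht : Finsupp.weight (fun i : Fin n ↦ (i : ℕ) + 1) t = d) : d.Partition where
  parts := (Finsupp.toMultiset t).map fun i : Fin n ↦ (i : ℕ) + 1
  parts_pos := by simp
  parts_sum := by rw [Finsupp.sum_map_toMultiset, ht]

lemma exists_multiset_fin_map_succ_eq {n d : ℕ} (p : d.Partition) (hp : ∀ i ∈ p.parts, i ≤ n) :
    ∃ s : Multiset (Fin n), s.map (fun i : Fin n ↦ (i : ℕ) + 1) = p.parts := by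
  have hlt : ∀ a ∈ p.parts.map (· - 1), a < n := by
    simp only [Multiset.mem_map]
    rintro _ ⟨a, ha, rfl⟩
    have := p.parts_pos ha
    have := hp a ha
    omega
  lift p.parts.map (· - 1) to Multiset (Fin n) using hlt with s hs
  refine ⟨s, ?_⟩
  calc s.map (fun i : Fin n ↦ (i : ℕ) + 1) = (p.parts.map (· - 1)).map (· + 1) := by
        rw [← hs, Multiset.map_map]; rfl
    _ = p.parts := by
        rw [Multiset.map_map]
        exact (Multiset.map_congr rfl fun a ha ↦ Nat.sub_add_cancel (p.parts_pos ha)).trans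
          (Multiset.map_id' _)

lemma card_weight_eq_card_parts_le (n d : ℕ) :
    Nat.card {t : Fin n →₀ ℕ // Finsupp.weight (fun i : Fin n ↦ (i : ℕ) + 1) t = d} =
      Nat.card {p : d.Partition // ∀ i ∈ p.parts, i ≤ n} := by
  refine Nat.card_eq_of_bijective (fun t ↦ ⟨ofMultiplicities t.1 t.2, ?_⟩) ⟨?_, ?_⟩
  · simp [ofMultiplicities]
  · rintro ⟨t, ht⟩ ⟨t', ht'⟩ h
    have hparts := congrArg (fun p ↦ p.1.parts) h
    exact Subtype.ext ((Multiset.map_injective fun i j h ↦ Fin.ext (by simpa using h)).comp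
      Multiset.toFinsupp.symm.injective hparts)
  · rintro ⟨p, hp⟩
    obtain ⟨s, hs⟩ := exists_multiset_fin_map_succ_eq p hp
    refine ⟨⟨Multiset.toFinsupp s, ?_⟩, ?_⟩
    · rw [← Finsupp.sum_map_toMultiset, Multiset.toFinsupp_toMultiset, hs, p.parts_sum]
    · exact Subtype.ext (Nat.Partition.ext (by simp [ofMultiplicities, hs]))

end Nat.Partition

/-- Hilbert series of the symmetric polynomials: the dimension of the space of symmetric
polynomials in `n` variables, homogeneous of degree `d`, equals the number of partitions of `d`
into parts of size at most `n`. -/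
theorem finrank_symHomogeneous (n d : ℕ) :
    Module.finrank ℚ (symHomogeneous n d) =
      Nat.card {p : Nat.Partition d // ∀ i ∈ p.parts, i ≤ n} := by
  have hcard : Fintype.card (Fin n) = n := Fintype.card_fin n
  rw [symHomogeneous, ← map_aeval_esymm_weightedHomogeneousSubmodule hcard.le,
    ← (Submodule.equivMapOfInjective _ (aeval_esymm_injective hcard.ge) _).finrank_eq,
    finrank_weightedHomogeneousSubmodule, Nat.Partition.card_weight_eq_card_parts_le]
end
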